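/- Let r ≥ 2, q = exp(iπ/r), and let α ∈ ℂ ∖ (ℤ ∖ rℤ). For integers n ≥ 1, f ∈ ℤ, define N(K^f_{2n+1}(α)) = Σ_{k ∈ H_r} q^{f·t_α + (2n+1)/2 · (−2t_α + t_{2α+k})} · d(2α+k), where t_β = (β² − (r−1)²)/2, H_r = {1−r, …, r−1}, and d is the modified dimension. Then for r = 5, n = 1, f = −2 this equals 5·q^{α²/2}·(q³{3α} + q{5α} − q^{−1}{9α})/{5α}, where {x} = q^x − q^{−x}. -/

import Mathlib

/-!
Write `u = q^α` and `ζ = q`, so that `ζ⁵ = -1`. For `k = 2j ∈ H₅` the exponent of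
the `k`-th summand is `α²/2 + 6jα + 3j² + 28`, and since `q^{10} = 1` every denominator
`{5(2α+k)} = {10α + 10j}` equals `{10α} = {5α}(u⁵ + u⁻⁵)`, which is nonzero because `2α ∉ ℤ`.
The sum is therefore `5 q^{α²/2} / {10α}` times a Laurent polynomial in `u` over `ℤ[ζ]`, and
modulo `ζ⁵ + 1` that polynomial factors as `(u⁵ + u⁻⁵)(ζ³{3α} + ζ{5α} - ζ⁻¹{9α})`.
-/

/-- `q^x = exp(xiπ/5)` for `q = exp(iπ/5)`. -/
noncomputable def qexp5 (x : ℂ) : ℂ := Complex.exp (x * Real.pi * Complex.I / 5)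

/-- `{x} = q^x - q^{-x}`. -/
noncomputable def qn5 (x : ℂ) : ℂ := qexp5 x - qexp5 (-x)

/-- `H_5 = {-4,-2,0,2,4}`. -/
def H5 : Finset ℤ := {-4, -2, 0, 2, 4}

/-- The modified dimension `d(β) = 5{β}/{5β}` for `r = 5`. -/
noncomputable def d5 (β : ℂ) : ℂ := 5 * qn5 β / qn5 (5 * β)

/-- The twist exponent `t_β = (β² - 16)/2` for `r = 5`. -/
noncomputable def t5 (β : ℂ) : ℂ := (β ^ 2 - 16) / 2

lemma qexp5_add (x y : ℂ) : qexp5 (x + y) = qexp5 x * qexp5 y := by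
  rw [qexp5, qexp5, qexp5, ← Complex.exp_add]
  ring_nf

lemma qexp5_ne_zero (x : ℂ) : qexp5 x ≠ 0 := Complex.exp_ne_zero _

lemma qexp5_int_mul (m : ℤ) (x : ℂ) : qexp5 (m * x) = qexp5 x ^ m := by
  rw [qexp5, qexp5, ← Complex.exp_int_mul]
  ring_nf

lemma qexp5_intCast (n : ℤ) : qexp5 n = qexp5 1 ^ n := by
  rw [← qexp5_int_mul, mul_one]

lemma qexp5_int_mul_add_int (m n : ℤ) (x : ℂ) :
    qexp5 (m * x + n) = qexp5 x ^ m * qexp5 1 ^ n := by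
  rw [qexp5_add, qexp5_int_mul, qexp5_intCast]

lemma qexp5_one_pow_five : qexp5 1 ^ 5 = -1 := by
  have h := qexp5_intCast 5
  rw [Int.cast_ofNat, zpow_ofNat] at h
  rw [← h, qexp5, ← Complex.exp_pi_mul_I]
  ring_nf

lemma qexp5_ten_mul_intCast (j : ℤ) : qexp5 (10 * j) = 1 := by
  have h10 : qexp5 1 ^ (10 : ℤ) = 1 := by
    rw [zpow_ofNat, show 10 = 5 * 2 by rfl, pow_mul, qexp5_one_pow_five]
    norm_num
  rw [← Int.cast_ofNat, ← Int.cast_mul, qexp5_intCast, zpow_mul, h10, one_zpow]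

lemma qn5_int_mul (m : ℤ) (x : ℂ) : qn5 (m * x) = qexp5 x ^ m - qexp5 x ^ (-m) := by
  rw [qn5, ← qexp5_int_mul, ← neg_mul, ← Int.cast_neg, ← qexp5_int_mul]

lemma qn5_int_mul_add_int (m n : ℤ) (x : ℂ) :
    qn5 (m * x + n) = qexp5 x ^ m * qexp5 1 ^ n - qexp5 x ^ (-m) * qexp5 1 ^ (-n) := by
  rw [qn5, ← qexp5_int_mul_add_int, ← qexp5_int_mul_add_int]
  push_cast
  ring_nf

lemma qn5_add_ten_mul_intCast (x : ℂ) (j : ℤ) : qn5 (x + 10 * j) = qn5 x := by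
  rw [qn5, qn5, neg_add, qexp5_add, qexp5_add, ← mul_neg, ← Int.cast_neg,
    qexp5_ten_mul_intCast, qexp5_ten_mul_intCast, mul_one, mul_one]

lemma qn5_ten_mul (x : ℂ) :
    qn5 (10 * x) = qn5 (5 * x) * (qexp5 x ^ 5 + qexp5 x ^ (-5 : ℤ)) := by
  have h5 : qexp5 (5 * x) = qexp5 x ^ 5 := by exact_mod_cast qexp5_int_mul 5 x
  have hm5 : qexp5 (-(5 * x)) = qexp5 x ^ (-5 : ℤ) := by
    rw [← neg_mul]
    exact_mod_cast qexp5_int_mul (-5) x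
  rw [qn5, qn5, show 10 * x = 5 * x + 5 * x by ring, neg_add, qexp5_add, qexp5_add, h5, hm5]
  ring

lemma qn5_ne_zero {x : ℂ} (hx : ∀ n : ℤ, x ≠ 5 * n) : qn5 x ≠ 0 := by
  intro h
  obtain ⟨n, hn⟩ := Complex.exp_eq_exp_iff_exists_int.mp (sub_eq_zero.mp h)
  refine hx n (mul_right_cancel₀ (mul_ne_zero (Complex.ofReal_ne_zero.mpr Real.pi_ne_zero)
    Complex.I_ne_zero) ?_)
  linear_combination (5 / 2 : ℂ) * hn

lemma qn5_ten_mul_ne_zero {α : ℂ}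
    (hα : ∀ k ∈ H5, ∀ n : ℤ, (n : ℂ) = 2 * α + (k : ℂ) → (5 : ℤ) ∣ n) :
    qn5 (10 * α) ≠ 0 := by
  refine qn5_ne_zero fun n hn => ?_
  have h2 := hα 2 (by decide) (n + 2) (by push_cast; linear_combination -hn / 5)
  have h4 := hα 4 (by decide) (n + 4) (by push_cast; linear_combination -hn / 5)
  omega

lemma trefoil_laurent_identity {K : Type*} [Field K] {u ζ : K} (hu : u ≠ 0) (hζ : ζ ^ 5 = -1) :
    ∑ j ∈ Finset.Icc (-2 : ℤ) 2,
        ζ ^ (3 * j ^ 2 + 28) * u ^ (6 * j) * (u ^ 2 * ζ ^ (2 * j) - u ^ (-2 : ℤ) * ζ ^ (-2 * j)) =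
      (u ^ 5 + u ^ (-5 : ℤ)) *
        (ζ ^ 3 * (u ^ 3 - u ^ (-3 : ℤ)) + ζ * (u ^ 5 - u ^ (-5 : ℤ)) -
          ζ ^ (-1 : ℤ) * (u ^ 9 - u ^ (-9 : ℤ))) := by
  have hζ0 : ζ ≠ 0 := by rintro rfl; norm_num at hζ
  have h10 : ζ ^ 10 = 1 := by rw [show 10 = 5 * 2 by rfl, pow_mul, hζ]; norm_num
  rw [show Finset.Icc (-2 : ℤ) 2 = {-2, -1, 0, 1, 2} by decide, Finset.sum_insert (by decide),
    Finset.sum_insert (by decide), Finset.sum_insert (by decide), Finset.sum_insert (by decide),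
    Finset.sum_singleton]
  norm_num
  rw [pow_eq_pow_mod 40 h10, pow_eq_pow_mod 31 h10, pow_eq_pow_mod 28 h10]
  norm_num
  field_simp
  -- the quotient of the difference of the two sides by `ζ ^ 5 + 1`
  linear_combination (u ^ 4 - u ^ 24 - ζ ^ 3 + ζ ^ 3 * u ^ 28 + ζ ^ 7 * (u ^ 16 - u ^ 12)) * hζ

lemma trefoil_summand_eq (α : ℂ) (j : ℤ) :
    qexp5 (-2 * t5 α + 3 / 2 * (-2 * t5 α + t5 (2 * α + ((2 * j : ℤ) : ℂ)))) *
        d5 (2 * α + ((2 * j : ℤ) : ℂ)) =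
      5 * qexp5 (α ^ 2 / 2) / qn5 (10 * α) *
        (qexp5 1 ^ (3 * j ^ 2 + 28) * qexp5 α ^ (6 * j) *
          (qexp5 α ^ 2 * qexp5 1 ^ (2 * j) - qexp5 α ^ (-2 : ℤ) * qexp5 1 ^ (-2 * j))) := by
  have hexp : -2 * t5 α + 3 / 2 * (-2 * t5 α + t5 (2 * α + ((2 * j : ℤ) : ℂ))) =
      α ^ 2 / 2 + (((6 * j : ℤ) : ℂ) * α + ((3 * j ^ 2 + 28 : ℤ) : ℂ)) := by
    simp only [t5]
    push_cast
    ring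
  have hnum : qn5 (2 * α + ((2 * j : ℤ) : ℂ)) =
      qexp5 α ^ 2 * qexp5 1 ^ (2 * j) - qexp5 α ^ (-2 : ℤ) * qexp5 1 ^ (-2 * j) := by
    rw [← Int.cast_two, qn5_int_mul_add_int, neg_mul]
    rfl
  have hden : qn5 (5 * (2 * α + ((2 * j : ℤ) : ℂ))) = qn5 (10 * α) := by
    rw [← qn5_add_ten_mul_intCast (10 * α) j]
    push_cast
    ring_nf
  rw [hexp, qexp5_add, qexp5_int_mul_add_int, d5, hnum, hden]
  ring

/-- For `r = 5`, `n = 1`, `f = -2`, the invariant of the framed trefoil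
`Σ_{k∈H_5} q^{f t_α + (3/2)(-2t_α + t_{2α+k})} d(2α+k)` equals
`5 q^{α²/2}(q³{3α} + q{5α} - q⁻¹{9α})/{5α}`. -/
theorem stmt16 (α : ℂ)
    (hα : ∀ k ∈ H5, ∀ n : ℤ, (n : ℂ) = 2 * α + (k : ℂ) → (5 : ℤ) ∣ n) :
    ∑ k ∈ H5, qexp5 ((-2) * t5 α + (3 / 2) * (-2 * t5 α + t5 (2 * α + (k : ℂ)))) *
        d5 (2 * α + (k : ℂ)) =
      5 * qexp5 (α ^ 2 / 2) *
        (qexp5 3 * qn5 (3 * α) + qexp5 1 * qn5 (5 * α) - qexp5 (-1) * qn5 (9 * α)) /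
          qn5 (5 * α) := by
  have hH5 : H5 = (Finset.Icc (-2 : ℤ) 2).map ⟨(2 * ·), mul_right_injective₀ two_ne_zero⟩ := by
    decide
  have h3 := qn5_int_mul 3 α
  have h5 := qn5_int_mul 5 α
  have h9 := qn5_int_mul 9 α
  have hq3 := qexp5_intCast 3
  have hqm1 := qexp5_intCast (-1)
  push_cast at h3 h5 h9 hq3 hqm1
  simp only [zpow_ofNat] at h3 h5 h9 hq3
  obtain ⟨-, hP⟩ := mul_ne_zero_iff.mp (qn5_ten_mul α ▸ qn5_ten_mul_ne_zero hα)
  rw [hH5, Finset.sum_map]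
  simp only [Function.Embedding.coeFn_mk, trefoil_summand_eq]
  rw [← Finset.mul_sum, trefoil_laurent_identity (qexp5_ne_zero α) qexp5_one_pow_five, qn5_ten_mul,
    ← h3, ← h5, ← h9, ← hq3, ← hqm1, div_mul_eq_mul_div, mul_comm (qexp5 α ^ 5 + _),
    ← mul_assoc, mul_div_mul_right _ _ hP]
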